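/- Let n ≥ 1 and β > 0, and set k(y,z,t) = t^β ∂_t^β P_t(y−z) for y,z ∈ ℝⁿ and t > 0, where ∂_t^β acts in the variable t. Then there exists C > 0 such that |k(y,z,t) − k(y,z′,t)| ≤ C t^β |z−z′| / (t + |y−z|)^{n+β+1} whenever t > 0 and y, z, z′ ∈ ℝⁿ satisfy |y−z| + t > 2|z−z′|. -/

import Mathlib

open MeasureTheory Real Set

/-- For `β > 0`, the unique `m ∈ ℕ` with `m - 1 ≤ β < m`. -/
noncomputable def fracOrder (β : ℝ) : ℕ := ⌊β⌋.toNat + 1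

/-- The `β`-th fractional derivative in `t` (à la Segovia–Wheeden):
`∂_t^β F(t) = (e^{−iπ(m−β)}/Γ(m−β)) ∫₀^∞ ∂_t^m F(t+s) s^{m−β−1} ds` with `m - 1 ≤ β < m`. -/
noncomputable def fracDeriv (β : ℝ) (F : ℝ → ℂ) (t : ℝ) : ℂ :=
  (Complex.exp (-(Complex.I * (Real.pi : ℂ) * ((fracOrder β : ℂ) - (β : ℂ)))) /
      Complex.Gamma ((fracOrder β : ℂ) - (β : ℂ))) *
    ∫ s in Set.Ioi (0 : ℝ), iteratedDeriv (fracOrder β) F (t + s) *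
      ((s ^ ((fracOrder β : ℝ) - β - 1) : ℝ) : ℂ)

/-- The classical Poisson kernel `P_t(z) = c_n t/(|z|² + t²)^((n+1)/2)`,
`c_n = Γ((n+1)/2)/π^((n+1)/2)`. -/
noncomputable def poissonKernelEucl (n : ℕ) (t : ℝ) (z : EuclideanSpace ℝ (Fin n)) : ℝ :=
  (Real.Gamma ((n + 1 : ℝ) / 2) / Real.pi ^ ((n + 1 : ℝ) / 2)) *
    (t / (‖z‖ ^ 2 + t ^ 2) ^ ((n + 1 : ℝ) / 2))

/-- The kernel `k(y,z,t) = t^β ∂_t^β P_t(y − z)`. -/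
noncomputable def kker (n : ℕ) (β : ℝ) (y z : EuclideanSpace ℝ (Fin n)) (t : ℝ) : ℂ :=
  ((t ^ β : ℝ) : ℂ) * fracDeriv β (fun τ => (poissonKernelEucl n τ (y - z) : ℂ)) t

/-!
Write `P_t(w) = Π(|w|, t)` with `Π(ρ, τ) = c_n τ / (ρ² + τ²)^((n+1)/2)`, a smooth function on
`ℝ² ∖ {0}` that is positively homogeneous of degree `-n`. Then `∂_τ^m Π` is homogeneous of
degree `-n-m` and `∂_ρ ∂_τ^m Π` of degree `-n-m-1`, so by compactness of the unit circle they are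
bounded by `C (ρ + τ)^(-n-m)` and `C (ρ + τ)^(-n-m-1)` on `ρ ≥ 0, τ > 0`. Since
`||y-z| - |y-z'|| ≤ |z-z'| < (t + |y-z|)/2`, the mean value theorem in `ρ` bounds the difference
of the two integrands defining `∂_t^β P_t` by `C |z-z'| (s + (t+|y-z|)/2)^(-n-m-1) s^(m-β-1)`,
and the substitution `s = (t+|y-z|) u / 2` turns its integral into `C' |z-z'| (t+|y-z|)^(-n-β-1)`.
-/

open Filter Topology
open scoped ContDiff

noncomputable section

section Homogeneous

variable {E : Type*} [NormedAddCommGroup E] [NormedSpace ℝ E]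

def IsPosHomogeneous (f : E → ℝ) (e : ℝ) : Prop :=
  ∀ ⦃l : ℝ⦄, 0 < l → ∀ ⦃p : E⦄, p ≠ 0 → f (l • p) = l ^ e * f p

theorem IsPosHomogeneous.exists_abs_le [ProperSpace E] {f : E → ℝ} {e : ℝ}
    (hf : IsPosHomogeneous f e) (hc : ContinuousOn f {0}ᶜ) :
    ∃ C ≥ 0, ∀ p ≠ 0, |f p| ≤ C * ‖p‖ ^ e := by
  obtain ⟨C, hC⟩ := (isCompact_sphere (0 : E) 1).exists_bound_of_continuousOn
    (hc.mono fun p hp => ne_zero_of_mem_unit_sphere ⟨p, hp⟩)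
  refine ⟨max C 0, le_max_right _ _, fun p hp => ?_⟩
  have hp' : 0 < ‖p‖ := norm_pos_iff.2 hp
  have hu : ‖p‖⁻¹ • p ∈ Metric.sphere (0 : E) 1 := by
    simpa using norm_smul_inv_norm (𝕜 := ℝ) hp
  calc |f p| = |f (‖p‖ • ‖p‖⁻¹ • p)| := by rw [smul_inv_smul₀ hp'.ne']
    _ = ‖p‖ ^ e * |f (‖p‖⁻¹ • p)| := by
      rw [hf hp' (ne_zero_of_mem_unit_sphere ⟨_, hu⟩), abs_mul,
        abs_of_pos (rpow_pos_of_pos hp' e)]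
    _ ≤ ‖p‖ ^ e * max C 0 := by
      gcongr
      exact (hC _ hu).trans (le_max_left _ _)
    _ = max C 0 * ‖p‖ ^ e := mul_comm _ _

theorem IsPosHomogeneous.fderiv_apply {f : E → ℝ} {e : ℝ} (hf : IsPosHomogeneous f e)
    (hd : DifferentiableOn ℝ f {0}ᶜ) (v : E) :
    IsPosHomogeneous (fun p => fderiv ℝ f p v) (e - 1) := by
  intro l hl p hp
  have hloc : (fun q => f (l • q)) =ᶠ[𝓝 p] fun q => l ^ e * f q :=
    eventually_of_mem (isOpen_compl_singleton.mem_nhds hp) fun q hq => hf hl hq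
  have key : l * fderiv ℝ f (l • p) v = l ^ e * fderiv ℝ f p v := by
    have := congrArg (fun L : E →L[ℝ] ℝ => L v) hloc.fderiv_eq
    simpa [fderiv_comp_smul, fderiv_const_mul ((hd p hp).differentiableAt
      (isOpen_compl_singleton.mem_nhds hp))] using this
  dsimp only
  rw [rpow_sub_one hl.ne', div_mul_eq_mul_div, ← key]
  field_simp

def iterDirDeriv (v : E) (m : ℕ) (f : E → ℝ) : E → ℝ :=
  (fun g p => fderiv ℝ g p v)^[m] f

theorem iterDirDeriv_succ (v : E) (m : ℕ) (f : E → ℝ) :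
    iterDirDeriv v (m + 1) f = fun p => fderiv ℝ (iterDirDeriv v m f) p v :=
  Function.iterate_succ_apply' _ _ _

theorem ContDiffOn.iterDirDeriv {f : E → ℝ} {s : Set E} (hf : ContDiffOn ℝ ∞ f s)
    (hs : IsOpen s) (v : E) (m : ℕ) : ContDiffOn ℝ ∞ (iterDirDeriv v m f) s := by
  induction m with
  | zero => exact hf
  | succ m ih =>
    rw [iterDirDeriv_succ]
    exact (ih.fderiv_of_isOpen hs le_rfl).clm_apply contDiffOn_const

theorem IsPosHomogeneous.iterDirDeriv {f : E → ℝ} {e : ℝ} (hf : IsPosHomogeneous f e)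
    (hd : ContDiffOn ℝ ∞ f {0}ᶜ) (v : E) (m : ℕ) :
    IsPosHomogeneous (iterDirDeriv v m f) (e - m) := by
  induction m with
  | zero => rw [Nat.cast_zero, sub_zero]; exact hf
  | succ m ih =>
    rw [iterDirDeriv_succ, Nat.cast_succ, ← sub_sub]
    exact ih.fderiv_apply
      ((hd.iterDirDeriv isOpen_compl_singleton v m).differentiableOn (by simp)) v

end Homogeneous

section Plane

theorem mk_ne_zero_of_snd_pos {ρ τ : ℝ} (hτ : 0 < τ) : ((ρ, τ) : ℝ × ℝ) ≠ 0 :=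
  fun h => hτ.ne' (Prod.mk_eq_zero.1 h).2

theorem hasDerivAt_comp_mk_left {f : ℝ × ℝ → ℝ} {ρ τ : ℝ} (hf : DifferentiableAt ℝ f (ρ, τ)) :
    HasDerivAt (fun x => f (x, τ)) (fderiv ℝ f (ρ, τ) (1, 0)) ρ :=
  hf.hasFDerivAt.comp_hasDerivAt ρ ((hasDerivAt_id ρ).prodMk (hasDerivAt_const ρ τ))

theorem hasDerivAt_comp_mk_right {f : ℝ × ℝ → ℝ} {ρ τ : ℝ} (hf : DifferentiableAt ℝ f (ρ, τ)) :
    HasDerivAt (fun x => f (ρ, x)) (fderiv ℝ f (ρ, τ) (0, 1)) τ :=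
  hf.hasFDerivAt.comp_hasDerivAt τ ((hasDerivAt_const τ ρ).prodMk (hasDerivAt_id τ))

variable {f : ℝ × ℝ → ℝ} {e : ℝ}

theorem IsPosHomogeneous.exists_abs_le_add_rpow (hf : IsPosHomogeneous f e)
    (hc : ContinuousOn f {0}ᶜ) (he : e ≤ 0) :
    ∃ C ≥ 0, ∀ ρ τ : ℝ, 0 ≤ ρ → 0 < τ → |f (ρ, τ)| ≤ C * (ρ + τ) ^ e := by
  obtain ⟨C, hC0, hC⟩ := hf.exists_abs_le hc
  refine ⟨C * 2 ^ (-e), by positivity, fun ρ τ hρ hτ => ?_⟩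
  have hnorm : (ρ + τ) / 2 ≤ ‖((ρ, τ) : ℝ × ℝ)‖ := by
    rw [Prod.norm_mk, Real.norm_eq_abs, Real.norm_eq_abs, abs_of_nonneg hρ, abs_of_pos hτ]
    linarith [le_max_left ρ τ, le_max_right ρ τ]
  calc |f (ρ, τ)| ≤ C * ‖((ρ, τ) : ℝ × ℝ)‖ ^ e := hC _ (mk_ne_zero_of_snd_pos hτ)
    _ ≤ C * ((ρ + τ) / 2) ^ e :=
      mul_le_mul_of_nonneg_left (rpow_le_rpow_of_nonpos (by positivity) hnorm he) hC0
    _ = C * 2 ^ (-e) * (ρ + τ) ^ e := by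
      rw [div_rpow (by positivity) zero_le_two, rpow_neg zero_le_two]
      ring

theorem IsPosHomogeneous.exists_abs_sub_le (hf : IsPosHomogeneous f e)
    (hd : ContDiffOn ℝ ∞ f {0}ᶜ) (he : e ≤ 0) :
    ∃ C ≥ 0, ∀ r r' τ : ℝ, 0 ≤ r → 0 ≤ r' → 0 < τ →
      |f (r, τ) - f (r', τ)| ≤ C * |r - r'| * (min r r' + τ) ^ (e - 1) := by
  have hd1 : DifferentiableOn ℝ f {0}ᶜ := hd.differentiableOn (by simp)
  obtain ⟨C, hC0, hC⟩ := (hf.fderiv_apply hd1 (1, 0)).exists_abs_le_add_rpow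
    ((hd.continuousOn_fderiv_of_isOpen isOpen_compl_singleton (by simp)).clm_apply
      continuousOn_const) (by linarith)
  refine ⟨C, hC0, fun r r' τ hr hr' hτ => ?_⟩
  have hderiv : ∀ ρ ∈ uIcc r' r,
      HasDerivWithinAt (fun x => f (x, τ)) (fderiv ℝ f (ρ, τ) (1, 0)) (uIcc r' r) ρ :=
    fun ρ _ => (hasDerivAt_comp_mk_left ((hd1 _ (mk_ne_zero_of_snd_pos hτ)).differentiableAt
      (isOpen_compl_singleton.mem_nhds (mk_ne_zero_of_snd_pos hτ)))).hasDerivWithinAt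
  have hbound : ∀ ρ ∈ uIcc r' r, ‖fderiv ℝ f (ρ, τ) (1, 0)‖ ≤ C * (min r r' + τ) ^ (e - 1) := by
    intro ρ hρ
    have hρ' : min r r' ≤ ρ := min_comm r r' ▸ hρ.1
    rw [Real.norm_eq_abs]
    refine (hC ρ τ ((le_min hr hr').trans hρ') hτ).trans ?_
    exact mul_le_mul_of_nonneg_left (rpow_le_rpow_of_nonpos
      (by positivity) (by linarith) (by linarith)) hC0
  have := (convex_uIcc r' r).norm_image_sub_le_of_norm_hasDerivWithin_le hderiv hbound
    left_mem_uIcc right_mem_uIcc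
  rw [Real.norm_eq_abs, Real.norm_eq_abs] at this
  exact this.trans_eq (mul_right_comm _ _ _)

end Plane

section WeightedIntegral

variable {γ M c : ℝ}

theorem integrableOn_add_rpow_neg_mul_rpow (hγ : 0 < γ) (hγM : γ < M) (hc : 0 < c) :
    IntegrableOn (fun s => (s + c) ^ (-M) * s ^ (γ - 1)) (Ioi 0) := by
  have hM : -M ≤ 0 := by linarith
  have hcont : ContinuousOn (fun s : ℝ => (s + c) ^ (-M) * s ^ (γ - 1)) (Ioi 0) :=
    ((continuousOn_id.add continuousOn_const).rpow_const fun s hs => Or.inl (add_pos hs hc).ne').mul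
      (continuousOn_id.rpow_const fun s hs => Or.inl (ne_of_gt hs))
  rw [← Ioc_union_Ioi_eq_Ioi zero_le_one]
  refine IntegrableOn.union ?_ ?_
  · have hmaj : IntegrableOn (fun s : ℝ => c ^ (-M) * s ^ (γ - 1)) (Ioc 0 1) :=
      ((intervalIntegrable_iff_integrableOn_Ioc_of_le zero_le_one).1
        (intervalIntegral.intervalIntegrable_rpow' (by linarith))).const_mul _
    refine hmaj.mono' ((hcont.mono Ioc_subset_Ioi_self).aestronglyMeasurable measurableSet_Ioc)
      (ae_restrict_of_forall_mem measurableSet_Ioc fun s ⟨hs, _⟩ => ?_)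
    rw [Real.norm_of_nonneg (by positivity)]
    exact mul_le_mul_of_nonneg_right (rpow_le_rpow_of_nonpos hc
      (le_add_of_nonneg_left hs.le) hM) (rpow_nonneg hs.le _)
  · refine (integrableOn_Ioi_rpow_of_lt (a := γ - 1 - M) (by linarith) one_pos).mono'
      ((hcont.mono (Ioi_subset_Ioi zero_le_one)).aestronglyMeasurable measurableSet_Ioi)
      (ae_restrict_of_forall_mem measurableSet_Ioi fun s (hs : 1 < s) => ?_)
    have hs0 : 0 < s := one_pos.trans hs
    rw [Real.norm_of_nonneg (by positivity), show γ - 1 - M = -M + (γ - 1) by ring, rpow_add hs0]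
    exact mul_le_mul_of_nonneg_right (rpow_le_rpow_of_nonpos hs0
      (le_add_of_nonneg_right hc.le) hM) (rpow_nonneg hs0.le _)

theorem setIntegral_add_rpow_neg_mul_rpow (hc : 0 < c) :
    ∫ s in Ioi 0, (s + c) ^ (-M) * s ^ (γ - 1)
      = c ^ (γ - M) * ∫ s in Ioi 0, (s + 1) ^ (-M) * s ^ (γ - 1) := by
  have hsub := integral_comp_mul_left_Ioi (fun s => (s + c) ^ (-M) * s ^ (γ - 1)) 0 hc
  have hscale : ∫ u in Ioi 0, (c * u + c) ^ (-M) * (c * u) ^ (γ - 1)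
      = c ^ (γ - M - 1) * ∫ u in Ioi 0, (u + 1) ^ (-M) * u ^ (γ - 1) := by
    rw [← integral_const_mul]
    refine setIntegral_congr_fun measurableSet_Ioi fun u (hu : 0 < u) => ?_
    rw [show c * u + c = c * (u + 1) by ring, mul_rpow hc.le (by positivity),
      mul_rpow hc.le hu.le, show γ - M - 1 = -M + (γ - 1) by ring, rpow_add hc]
    ring
  rw [mul_zero, smul_eq_mul, hscale, rpow_sub_one hc.ne'] at hsub
  field_simp at hsub
  linarith

theorem integrableOn_mul_rpow_of_abs_le {φ : ℝ → ℝ} {C : ℝ} (hγ : 0 < γ) (hγM : γ < M)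
    (hc : 0 < c) (hφ : ContinuousOn φ (Ioi 0)) (hb : ∀ s > 0, |φ s| ≤ C * (s + c) ^ (-M)) :
    IntegrableOn (fun s => φ s * s ^ (γ - 1)) (Ioi 0) := by
  refine ((integrableOn_add_rpow_neg_mul_rpow hγ hγM hc).const_mul C).mono'
    ((hφ.mul (continuousOn_id.rpow_const fun s hs => Or.inl (ne_of_gt hs))).aestronglyMeasurable
      measurableSet_Ioi)
    (ae_restrict_of_forall_mem measurableSet_Ioi fun s (hs : 0 < s) => ?_)
  rw [norm_mul, Real.norm_eq_abs, Real.norm_of_nonneg (rpow_nonneg hs.le _), ← mul_assoc]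
  exact mul_le_mul_of_nonneg_right (hb s hs) (rpow_nonneg hs.le _)

theorem abs_setIntegral_mul_rpow_le {φ : ℝ → ℝ} {C : ℝ} (hγ : 0 < γ) (hγM : γ < M)
    (hc : 0 < c) (hb : ∀ s > 0, |φ s| ≤ C * (s + c) ^ (-M)) :
    |∫ s in Ioi 0, φ s * s ^ (γ - 1)|
      ≤ C * (∫ s in Ioi 0, (s + 1) ^ (-M) * s ^ (γ - 1)) * c ^ (γ - M) := by
  have hbound : ∀ᵐ s ∂(volume.restrict (Ioi 0)),
      ‖φ s * s ^ (γ - 1)‖ ≤ C * ((s + c) ^ (-M) * s ^ (γ - 1)) := by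
    refine ae_restrict_of_forall_mem measurableSet_Ioi fun s (hs : 0 < s) => ?_
    rw [norm_mul, Real.norm_eq_abs, Real.norm_of_nonneg (rpow_nonneg hs.le _), ← mul_assoc]
    exact mul_le_mul_of_nonneg_right (hb s hs) (rpow_nonneg hs.le _)
  have := norm_integral_le_of_norm_le
    ((integrableOn_add_rpow_neg_mul_rpow hγ hγM hc).const_mul C) hbound
  rw [Real.norm_eq_abs, integral_const_mul, setIntegral_add_rpow_neg_mul_rpow hc] at this
  linarith

end WeightedIntegral

theorem IsPosHomogeneous.exists_abs_integral_sub_le {f : ℝ × ℝ → ℝ} {M γ : ℝ}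
    (hf : IsPosHomogeneous f (-M)) (hd : ContDiffOn ℝ ∞ f {0}ᶜ) (hγ : 0 < γ) (hγM : γ < M) :
    ∃ C ≥ 0, ∀ r r' t : ℝ, 0 ≤ r → 0 ≤ r' → 0 < t → 2 * |r - r'| < t + r →
      |(∫ s in Ioi 0, f (r, t + s) * s ^ (γ - 1)) - ∫ s in Ioi 0, f (r', t + s) * s ^ (γ - 1)|
        ≤ C * |r - r'| * (t + r) ^ (γ - M - 1) := by
  have hM : -M ≤ 0 := by linarith
  obtain ⟨CF, hCF0, hCF⟩ := hf.exists_abs_le_add_rpow hd.continuousOn hM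
  obtain ⟨C, hC0, hC⟩ := hf.exists_abs_sub_le hd hM
  set K := ∫ s in Ioi (0 : ℝ), (s + 1) ^ (-(M + 1)) * s ^ (γ - 1)
  have hK : 0 ≤ K := setIntegral_nonneg measurableSet_Ioi fun s (hs : 0 < s) => by positivity
  refine ⟨C * K * 2 ^ (M + 1 - γ), by positivity, fun r r' t hr hr' ht hsep => ?_⟩
  have hint : ∀ ρ ≥ 0, IntegrableOn (fun s => f (ρ, t + s) * s ^ (γ - 1)) (Ioi 0) := by
    intro ρ hρ
    have hcont : ContinuousOn (fun s => f (ρ, t + s)) (Ioi 0) :=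
      hd.continuousOn.comp (by fun_prop) fun s (hs : 0 < s) =>
        mk_ne_zero_of_snd_pos (add_pos ht hs)
    refine integrableOn_mul_rpow_of_abs_le (C := CF) hγ hγM ht hcont fun s hs => ?_
    refine (hCF ρ (t + s) hρ (add_pos ht hs)).trans (mul_le_mul_of_nonneg_left ?_ hCF0)
    exact rpow_le_rpow_of_nonpos (add_pos hs ht) (by linarith) hM
  have hpt : ∀ s > 0, |f (r, t + s) - f (r', t + s)|
      ≤ C * |r - r'| * (s + (t + r) / 2) ^ (-(M + 1)) := by
    intro s hs
    -- every `ρ` between `r` and `r'` has `ρ + t + s ≥ r - |r - r'| + t + s > s + (t + r) / 2`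
    have hmin : r - |r - r'| ≤ min r r' :=
      le_min (by linarith [abs_nonneg (r - r')]) (by linarith [le_abs_self (r - r')])
    rw [neg_add']
    exact (hC r r' (t + s) hr hr' (add_pos ht hs)).trans (mul_le_mul_of_nonneg_left
      (rpow_le_rpow_of_nonpos (by positivity) (by linarith) (by linarith)) (by positivity))
  have hbound := abs_setIntegral_mul_rpow_le (φ := fun s => f (r, t + s) - f (r', t + s)) hγ
    (by linarith : γ < M + 1) (by positivity : 0 < (t + r) / 2) hpt
  simp only [sub_mul] at hbound
  rw [← integral_sub (hint r hr) (hint r' hr')]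
  refine hbound.trans (le_of_eq ?_)
  rw [div_rpow (by positivity) zero_le_two, div_eq_mul_inv, ← rpow_neg zero_le_two,
    show -(γ - (M + 1)) = M + 1 - γ by ring, show γ - (M + 1) = γ - M - 1 by ring]
  ring

section Poisson

def poissonProfile (n : ℕ) (p : ℝ × ℝ) : ℝ :=
  (Real.Gamma ((n + 1 : ℝ) / 2) / Real.pi ^ ((n + 1 : ℝ) / 2)) *
    (p.2 / (p.1 ^ 2 + p.2 ^ 2) ^ ((n + 1 : ℝ) / 2))

theorem poissonKernelEucl_eq_poissonProfile (n : ℕ) (t : ℝ) (w : EuclideanSpace ℝ (Fin n)) :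
    poissonKernelEucl n t w = poissonProfile n (‖w‖, t) :=
  rfl

theorem fst_sq_add_snd_sq_pos {p : ℝ × ℝ} (hp : p ≠ 0) : 0 < p.1 ^ 2 + p.2 ^ 2 := by
  have : p.1 ≠ 0 ∨ p.2 ≠ 0 := by
    contrapose! hp
    exact Prod.ext hp.1 hp.2
  rcases this with h | h <;> positivity

theorem contDiffOn_poissonProfile (n : ℕ) : ContDiffOn ℝ ∞ (poissonProfile n) {0}ᶜ := by
  intro p hp
  have hq := fst_sq_add_snd_sq_pos hp
  exact (contDiffAt_const.mul (contDiffAt_snd.div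
    (((contDiffAt_fst.pow 2).add (contDiffAt_snd.pow 2)).rpow_const_of_ne hq.ne')
    (rpow_pos_of_pos hq _).ne')).contDiffWithinAt

theorem isPosHomogeneous_poissonProfile (n : ℕ) : IsPosHomogeneous (poissonProfile n) (-n) := by
  intro l hl p hp
  have hq := fst_sq_add_snd_sq_pos hp
  have hscale : ((l * p.1) ^ 2 + (l * p.2) ^ 2) ^ ((n + 1 : ℝ) / 2)
      = l ^ ((n : ℝ) + 1) * (p.1 ^ 2 + p.2 ^ 2) ^ ((n + 1 : ℝ) / 2) := by
    rw [show (l * p.1) ^ 2 + (l * p.2) ^ 2 = l ^ 2 * (p.1 ^ 2 + p.2 ^ 2) by ring,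
      mul_rpow (by positivity) hq.le, ← rpow_natCast l 2, ← rpow_mul hl.le]
    congr 2
    push_cast
    ring
  simp only [poissonProfile, Prod.smul_fst, Prod.smul_snd, smul_eq_mul, hscale]
  rw [rpow_add hl, rpow_one, rpow_neg hl.le, rpow_natCast]
  have : 0 < (p.1 ^ 2 + p.2 ^ 2) ^ ((n + 1 : ℝ) / 2) := rpow_pos_of_pos hq _
  field_simp

theorem contDiffOn_iterDirDeriv_poissonProfile (n m : ℕ) :
    ContDiffOn ℝ ∞ (iterDirDeriv (0, 1) m (poissonProfile n)) {0}ᶜ :=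
  (contDiffOn_poissonProfile n).iterDirDeriv isOpen_compl_singleton _ m

theorem isPosHomogeneous_iterDirDeriv_poissonProfile (n m : ℕ) :
    IsPosHomogeneous (iterDirDeriv (0, 1) m (poissonProfile n)) (-(n + m : ℝ)) := by
  rw [neg_add']
  exact (isPosHomogeneous_poissonProfile n).iterDirDeriv (contDiffOn_poissonProfile n) _ m

theorem iteratedDeriv_ofReal_comp_mk {f : ℝ × ℝ → ℝ} (hf : ContDiffOn ℝ ∞ f {0}ᶜ) (ρ : ℝ)
    (m : ℕ) {τ : ℝ} (hτ : 0 < τ) :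
    iteratedDeriv m (fun x => (f (ρ, x) : ℂ)) τ = iterDirDeriv (0, 1) m f (ρ, τ) := by
  induction m generalizing τ with
  | zero => rfl
  | succ m ih =>
    have hev : iteratedDeriv m (fun x => (f (ρ, x) : ℂ))
        =ᶠ[𝓝 τ] fun x => (iterDirDeriv (0, 1) m f (ρ, x) : ℂ) :=
      eventually_of_mem (Ioi_mem_nhds hτ) fun x hx => ih hx
    have hd : DifferentiableAt ℝ (iterDirDeriv (0, 1) m f) (ρ, τ) :=
      ((hf.iterDirDeriv isOpen_compl_singleton _ m).differentiableOn (by simp)).differentiableAt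
        (isOpen_compl_singleton.mem_nhds (mk_ne_zero_of_snd_pos hτ))
    rw [iteratedDeriv_succ, hev.deriv_eq, iterDirDeriv_succ]
    exact (hasDerivAt_comp_mk_right hd).ofReal_comp.deriv

end Poisson

theorem lt_fracOrder (β : ℝ) : β < fracOrder β := by
  have h1 := Int.lt_floor_add_one β
  have h2 : ((⌊β⌋ : ℤ) : ℝ) ≤ (⌊β⌋.toNat : ℝ) := by exact_mod_cast Int.self_le_toNat ⌊β⌋
  simp only [fracOrder, Nat.cast_add, Nat.cast_one]
  linarith

def fracDerivConst (β : ℝ) : ℂ :=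
  Complex.exp (-(Complex.I * (Real.pi : ℂ) * ((fracOrder β : ℂ) - (β : ℂ)))) /
    Complex.Gamma ((fracOrder β : ℂ) - (β : ℂ))

def poissonFracIntegral (n : ℕ) (β r t : ℝ) : ℝ :=
  ∫ s in Ioi 0, iterDirDeriv (0, 1) (fracOrder β) (poissonProfile n) (r, t + s) *
    s ^ ((fracOrder β : ℝ) - β - 1)

theorem kker_eq_mul_poissonFracIntegral (n : ℕ) (β : ℝ) (y z : EuclideanSpace ℝ (Fin n))
    {t : ℝ} (ht : 0 < t) :
    kker n β y z t = (t ^ β : ℝ) * fracDerivConst β * poissonFracIntegral n β ‖y - z‖ t := by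
  rw [kker, fracDeriv, fracDerivConst, poissonFracIntegral, ← integral_complex_ofReal, ← mul_assoc]
  congr 1
  refine setIntegral_congr_fun measurableSet_Ioi fun s (hs : 0 < s) => ?_
  simp only [poissonKernelEucl_eq_poissonProfile]
  rw [iteratedDeriv_ofReal_comp_mk (contDiffOn_poissonProfile n) _ _ (add_pos ht hs)]
  push_cast
  rfl

end

theorem statement3_general (n : ℕ) (β : ℝ) (hβ : 0 < β) :
    ∃ C > (0 : ℝ), ∀ (y z z' : EuclideanSpace ℝ (Fin n)) (t : ℝ), 0 < t →
      ‖y - z‖ + t > 2 * ‖z - z'‖ →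
      ‖kker n β y z t - kker n β y z' t‖
        ≤ C * t ^ β * ‖z - z'‖ / (t + ‖y - z‖) ^ ((n : ℝ) + β + 1) := by
  have hγ : 0 < (fracOrder β : ℝ) - β := sub_pos.2 (lt_fracOrder β)
  have hγM : (fracOrder β : ℝ) - β < n + fracOrder β := by linarith [n.cast_nonneg (α := ℝ)]
  obtain ⟨C, hC0, hC⟩ := (isPosHomogeneous_iterDirDeriv_poissonProfile n (fracOrder β))
    |>.exists_abs_integral_sub_le (contDiffOn_iterDirDeriv_poissonProfile n _) hγ hγM
  refine ⟨‖fracDerivConst β‖ * C + 1, by positivity, fun y z z' t ht hsep => ?_⟩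
  have hdist : |‖y - z‖ - ‖y - z'‖| ≤ ‖z - z'‖ := by
    simpa [norm_sub_rev z z'] using abs_norm_sub_norm_le (y - z) (y - z')
  have hI : |poissonFracIntegral n β ‖y - z‖ t - poissonFracIntegral n β ‖y - z'‖ t|
      ≤ C * ‖z - z'‖ / (t + ‖y - z‖) ^ ((n : ℝ) + β + 1) := by
    refine (hC _ _ t (norm_nonneg _) (norm_nonneg _) ht (by linarith)).trans ?_
    rw [show (fracOrder β : ℝ) - β - (n + fracOrder β) - 1 = -((n : ℝ) + β + 1) by ring,
      rpow_neg (by positivity), ← div_eq_mul_inv]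
    gcongr
  rw [kker_eq_mul_poissonFracIntegral n β y z ht, kker_eq_mul_poissonFracIntegral n β y z' ht,
    ← mul_sub, ← Complex.ofReal_sub, norm_mul, norm_mul, Complex.norm_real, Complex.norm_real,
    Real.norm_of_nonneg (by positivity), Real.norm_eq_abs]
  calc t ^ β * ‖fracDerivConst β‖ * |_|
      ≤ t ^ β * ‖fracDerivConst β‖ * (C * ‖z - z'‖ / (t + ‖y - z‖) ^ ((n : ℝ) + β + 1)) := by
        gcongr
    _ ≤ (‖fracDerivConst β‖ * C + 1) * t ^ β * ‖z - z'‖ / (t + ‖y - z‖) ^ ((n : ℝ) + β + 1) := by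
        rw [mul_div_assoc, mul_div_assoc]
        linarith [show 0 ≤ t ^ β * (‖z - z'‖ / (t + ‖y - z‖) ^ ((n : ℝ) + β + 1)) by positivity]

/-- `|k(y,z,t) − k(y,z′,t)| ≤ C t^β |z−z′| / (t + |y−z|)^{n+β+1}`
whenever `|y−z| + t > 2|z−z′|`. -/
theorem statement3 (n : ℕ) (hn : 1 ≤ n) (β : ℝ) (hβ : 0 < β) :
    ∃ C > (0 : ℝ), ∀ (y z z' : EuclideanSpace ℝ (Fin n)) (t : ℝ), 0 < t →
      ‖y - z‖ + t > 2 * ‖z - z'‖ →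
      ‖kker n β y z t - kker n β y z' t‖
        ≤ C * t ^ β * ‖z - z'‖ / (t + ‖y - z‖) ^ ((n : ℝ) + β + 1) :=
  statement3_general n β hβ
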